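/- Let r > 0. If z₁, z₂ ∈ ℂ satisfy z₁² + z₂² = −r², then √( (log|z₁+√(z₁²−1)|)² + (log|z₂+√(z₂²−1)|)² ) ≥ log(r + √(r²+1)), with equality attained at (z₁, z₂) = (0, ±ir). -/

import Mathlib

/-- The larger of the two values of `|ζ + √(ζ²-1)|` (always `≥ 1`). -/
noncomputable def jouk (ζ : ℂ) : ℝ :=
  max (‖ζ + (ζ ^ 2 - 1) ^ ((1 : ℂ) / 2)‖)
    (‖ζ - (ζ ^ 2 - 1) ^ ((1 : ℂ) / 2)‖)

/-- The square root squared. -/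
lemma jouk_sqrt_sq (ζ : ℂ) : ((ζ ^ 2 - 1) ^ ((1 : ℂ) / 2)) ^ 2 = ζ ^ 2 - 1 := by
  rw [one_div]
  exact Complex.cpow_ofNat_inv_pow (ζ ^ 2 - 1) 2

/-- `jouk` can be computed from any square root of `ζ² - 1`. -/
lemma jouk_eq (ζ w : ℂ) (hw : w ^ 2 = ζ ^ 2 - 1) :
    jouk ζ = max (‖ζ + w‖) (‖ζ - w‖) := by
  have h0 : ((ζ ^ 2 - 1) ^ ((1 : ℂ) / 2)) ^ 2 = ζ ^ 2 - 1 := jouk_sqrt_sq ζ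
  rw [jouk]
  set w0 := (ζ ^ 2 - 1) ^ ((1 : ℂ) / 2)
  have h : (w - w0) * (w + w0) = 0 := by linear_combination hw - h0
  rcases mul_eq_zero.1 h with h1 | h1
  · rw [sub_eq_zero.1 h1]
  · have h2 : ζ + w0 = ζ - w := by linear_combination h1
    have h3 : ζ - w0 = ζ + w := by linear_combination -h1
    rw [h2, h3, max_comm]

lemma sinh_le_mul_cosh {x : ℝ} (hx : 0 ≤ x) : Real.sinh x ≤ x * Real.cosh x := by
  have hmono : MonotoneOn (fun x => x * Real.cosh x - Real.sinh x) (Set.Ici (0:ℝ)) := by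
    apply monotoneOn_of_deriv_nonneg (convex_Ici 0)
    · fun_prop
    · fun_prop
    · intro y hy
      rw [interior_Ici, Set.mem_Ioi] at hy
      have h1 : HasDerivAt (fun x : ℝ => x * Real.cosh x - Real.sinh x)
          (1 * Real.cosh y + y * Real.sinh y - Real.cosh y) y :=
        ((hasDerivAt_id y).mul (Real.hasDerivAt_cosh y)).sub (Real.hasDerivAt_sinh y)
      rw [h1.deriv]
      nlinarith [Real.sinh_pos_iff.2 hy]
  have := hmono (Set.self_mem_Ici) (Set.mem_Ici.2 hx) hx
  simp at this
  linarith

lemma mul_sinh_le {u t : ℝ} (hu : 0 ≤ u) (hut : u ≤ t) : t * Real.sinh u ≤ u * Real.sinh t := by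
  have hmono : MonotoneOn (fun x => u * Real.sinh x - x * Real.sinh u) (Set.Ici u) := by
    apply monotoneOn_of_deriv_nonneg (convex_Ici u)
    · fun_prop
    · fun_prop
    · intro y hy
      rw [interior_Ici, Set.mem_Ioi] at hy
      have h1 : HasDerivAt (fun x : ℝ => u * Real.sinh x - x * Real.sinh u)
          (u * Real.cosh y - 1 * Real.sinh u) y :=
        ((Real.hasDerivAt_sinh y).const_mul u).sub ((hasDerivAt_id y).mul_const _)
      rw [h1.deriv]
      have h2 : Real.cosh u ≤ Real.cosh y := by
        rw [Real.cosh_le_cosh, abs_of_nonneg hu, abs_of_nonneg (hu.trans hy.le)]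
        exact hy.le
      nlinarith [sinh_le_mul_cosh hu, mul_le_mul_of_nonneg_left h2 hu]
  have := hmono (Set.self_mem_Ici) (Set.mem_Ici.2 hut) hut
  simp only [sub_self] at this
  nlinarith [this]

lemma sinh_sq_superadd {u v : ℝ} (hu : 0 ≤ u) (hv : 0 ≤ v) :
    Real.sinh u ^ 2 + Real.sinh v ^ 2 ≤ Real.sinh (Real.sqrt (u ^ 2 + v ^ 2)) ^ 2 := by
  set t := Real.sqrt (u ^ 2 + v ^ 2) with ht
  have ht0 : 0 ≤ t := Real.sqrt_nonneg _
  have htsq : t ^ 2 = u ^ 2 + v ^ 2 := Real.sq_sqrt (by positivity)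
  have hut : u ≤ t := by nlinarith
  have hvt : v ≤ t := by nlinarith
  rcases eq_or_lt_of_le ht0 with h | h
  · have hu0 : u = 0 := le_antisymm (by linarith) hu
    have hv0 : v = 0 := le_antisymm (by linarith) hv
    simp [hu0, hv0]
    positivity
  · have h1 := mul_sinh_le hu hut
    have h2 := mul_sinh_le hv hvt
    have hsu : 0 ≤ Real.sinh u := Real.sinh_nonneg_iff.2 hu
    have hsv : 0 ≤ Real.sinh v := Real.sinh_nonneg_iff.2 hv
    have hst : 0 ≤ Real.sinh t := Real.sinh_nonneg_iff.2 ht0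
    -- (t sinh u)^2 ≤ (u sinh t)^2 etc.
    have h1' : (t * Real.sinh u) ^ 2 ≤ (u * Real.sinh t) ^ 2 := by
      apply pow_le_pow_left₀ (by positivity) h1
    have h2' : (t * Real.sinh v) ^ 2 ≤ (v * Real.sinh t) ^ 2 := by
      apply pow_le_pow_left₀ (by positivity) h2
    have ht2 : 0 < t ^ 2 := by positivity
    nlinarith [h1', h2', ht2]

/-- Key pointwise bound: `Re(ζ²) ≥ -sinh²(log jouk ζ)`. -/
lemma re_sq_ge (ζ : ℂ) : -(Real.sinh (Real.log (jouk ζ)) ^ 2) ≤ (ζ ^ 2).re := by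
  obtain ⟨w, hw⟩ : ∃ w, w ^ 2 = ζ ^ 2 - 1 := ⟨_, jouk_sqrt_sq ζ⟩
  rw [jouk_eq ζ w hw]
  have hab : (ζ + w) * (ζ - w) = 1 := by linear_combination -hw
  have ha0 : ζ + w ≠ 0 := left_ne_zero_of_mul_eq_one hab
  have h4 : ζ ^ 2 * 4 = (ζ + w) ^ 2 + (ζ - w) ^ 2 + 2 := by linear_combination -2 * hw
  have h5 : (ζ ^ 2).re * 4 = ((ζ + w) ^ 2).re + ((ζ - w) ^ 2).re + 2 := by
    have := congrArg Complex.re h4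
    simpa [Complex.add_re, Complex.mul_re] using this
  have hsq1 : (ζ + w) ^ 2 * (ζ - w) ^ 2 = 1 := by rw [← mul_pow, hab, one_pow]
  have hbinv : ((ζ - w) ^ 2) = ((ζ + w) ^ 2)⁻¹ := eq_inv_of_mul_eq_one_right hsq1
  set A := ‖ζ + w‖ with hA
  set B := ‖ζ - w‖ with hB
  set m := Complex.normSq (ζ + w) with hm
  have hm0 : 0 < m := Complex.normSq_pos.2 ha0
  have hA0 : 0 < A := norm_pos_iff.2 ha0
  have hmA : m = A ^ 2 := (Complex.sq_norm _).symm
  have hABmul : A * B = 1 := by rw [hA, hB, ← norm_mul, hab, norm_one]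
  have hBA : B = A⁻¹ := eq_inv_of_mul_eq_one_right hABmul
  have hnm : Complex.normSq ((ζ + w) ^ 2) = m ^ 2 := by rw [hm]; exact map_pow Complex.normSq _ 2
  have h6 : ((ζ - w) ^ 2).re = ((ζ + w) ^ 2).re / m ^ 2 := by
    rw [hbinv, Complex.inv_re, hnm]
  set x := ((ζ + w) ^ 2).re with hx
  have hxm : -m ≤ x := by
    have h7 := (abs_le.1 (Complex.abs_re_le_norm ((ζ + w) ^ 2))).1
    have h8 : ‖(ζ + w) ^ 2‖ = m := by
      rw [norm_pow, ← hA, hmA]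
    linarith [h7, h8.symm.le]
  rw [hBA]
  have hAinv : 0 < A⁻¹ := by positivity
  have hminv : m⁻¹ = (A⁻¹) ^ 2 := by rw [hmA, inv_pow]
  have hsinh : Real.sinh (Real.log (max A A⁻¹)) ^ 2 = (m + m⁻¹ - 2) / 4 := by
    rcases le_total A A⁻¹ with h | h
    · rw [max_eq_right h, Real.sinh_log hAinv, hmA]
      have : A ≠ 0 := hA0.ne'
      field_simp
      ring
    · rw [max_eq_left h, Real.sinh_log hA0, hmA]
      have : A ≠ 0 := hA0.ne'
      field_simp
      ring
  rw [hsinh]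
  rw [h6] at h5
  have hmm : m * (m ^ 2)⁻¹ = m⁻¹ := by
    field_simp
  have key : 0 ≤ (x + m) * (1 + (m ^ 2)⁻¹) := by
    apply mul_nonneg (by linarith)
    positivity
  have hdiv : x / m ^ 2 = x * (m ^ 2)⁻¹ := div_eq_mul_inv _ _
  nlinarith [key, hmm, h5, hdiv]

lemma one_le_jouk (ζ : ℂ) : 1 ≤ jouk ζ := by
  obtain ⟨w, hw⟩ : ∃ w, w ^ 2 = ζ ^ 2 - 1 := ⟨_, jouk_sqrt_sq ζ⟩
  rw [jouk_eq ζ w hw]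
  have hab : (ζ + w) * (ζ - w) = 1 := by linear_combination -hw
  have habs : ‖ζ + w‖ * ‖ζ - w‖ = 1 := by
    rw [← norm_mul, hab, norm_one]
  rcases le_total 1 (‖ζ + w‖) with h | h
  · exact le_max_of_le_left h
  · refine le_max_of_le_right ?_
    nlinarith [norm_nonneg (ζ + w), norm_nonneg (ζ - w)]

theorem stmt13 (r : ℝ) (hr : 0 < r) :
    (∀ z1 z2 : ℂ, z1 ^ 2 + z2 ^ 2 = -(r ^ 2 : ℂ) →
      Real.log (r + Real.sqrt (r ^ 2 + 1)) ≤
        Real.sqrt ((Real.log (jouk z1)) ^ 2 + (Real.log (jouk z2)) ^ 2)) ∧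
    ((0 : ℂ) ^ 2 + ((r : ℂ) * Complex.I) ^ 2 = -(r ^ 2 : ℂ) ∧
      Real.sqrt ((Real.log (jouk 0)) ^ 2 + (Real.log (jouk ((r : ℂ) * Complex.I))) ^ 2) =
        Real.log (r + Real.sqrt (r ^ 2 + 1)) ∧
      Real.sqrt ((Real.log (jouk 0)) ^ 2 + (Real.log (jouk (-((r : ℂ) * Complex.I)))) ^ 2) =
        Real.log (r + Real.sqrt (r ^ 2 + 1))) := by
  set s := Real.sqrt (r ^ 2 + 1) with hsdef
  have hs0 : 0 ≤ s := Real.sqrt_nonneg _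
  have hssq : s ^ 2 = r ^ 2 + 1 := Real.sq_sqrt (by positivity)
  have hs1 : 1 ≤ s := by nlinarith
  have hrs : r < s := by nlinarith
  have hj0 : jouk 0 = 1 := by
    rw [jouk_eq 0 Complex.I (by rw [Complex.I_sq]; norm_num)]
    simp
  have hw2 : ((s : ℂ) * Complex.I) ^ 2 = ((r : ℂ) * Complex.I) ^ 2 - 1 := by
    rw [mul_pow, mul_pow, Complex.I_sq, ← Complex.ofReal_pow, ← Complex.ofReal_pow, hssq]
    push_cast
    ring
  have habs1 : ‖(r : ℂ) * Complex.I + (s : ℂ) * Complex.I‖ = r + s := by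
    have e1 : (r : ℂ) * Complex.I + (s : ℂ) * Complex.I = ((r + s : ℝ) : ℂ) * Complex.I := by
      push_cast; ring
    rw [e1, norm_mul, Complex.norm_I, Complex.norm_real, Real.norm_eq_abs, mul_one, abs_of_nonneg (by linarith)]
  have habs2 : ‖(r : ℂ) * Complex.I - (s : ℂ) * Complex.I‖ = s - r := by
    have e2 : (r : ℂ) * Complex.I - (s : ℂ) * Complex.I = ((r - s : ℝ) : ℂ) * Complex.I := by
      push_cast; ring
    rw [e2, norm_mul, Complex.norm_I, Complex.norm_real, Real.norm_eq_abs, mul_one, abs_of_nonpos (by linarith)]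
    ring
  have hjr : jouk ((r : ℂ) * Complex.I) = r + s := by
    rw [jouk_eq _ _ hw2, habs1, habs2]
    exact max_eq_left (by linarith)
  have hw2' : ((s : ℂ) * Complex.I) ^ 2 = (-((r : ℂ) * Complex.I)) ^ 2 - 1 := by
    rw [neg_sq]
    exact hw2
  have hjr' : jouk (-((r : ℂ) * Complex.I)) = r + s := by
    rw [jouk_eq _ _ hw2']
    have e1 : -((r : ℂ) * Complex.I) + (s : ℂ) * Complex.I =
        -((r : ℂ) * Complex.I - (s : ℂ) * Complex.I) := by ring
    have e2 : -((r : ℂ) * Complex.I) - (s : ℂ) * Complex.I =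
        -((r : ℂ) * Complex.I + (s : ℂ) * Complex.I) := by ring
    rw [e1, e2, norm_neg, norm_neg, habs1, habs2]
    exact max_eq_right (by linarith)
  have hlog0 : (0 : ℝ) ≤ Real.log (r + s) := Real.log_nonneg (by linarith)
  refine ⟨?_, ?_, ?_, ?_⟩
  · intro z1 z2 h
    set u := Real.log (jouk z1) with hu'
    set v := Real.log (jouk z2) with hv'
    have hu : 0 ≤ u := Real.log_nonneg (one_le_jouk z1)
    have hv : 0 ≤ v := Real.log_nonneg (one_le_jouk z2)
    have h1 := re_sq_ge z1
    have h2 := re_sq_ge z2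
    have hre : (z1 ^ 2).re + (z2 ^ 2).re = -(r ^ 2) := by
      have := congrArg Complex.re h
      simpa [← Complex.ofReal_pow] using this
    have hsum : r ^ 2 ≤ Real.sinh u ^ 2 + Real.sinh v ^ 2 := by linarith
    have hkey := sinh_sq_superadd hu hv
    have hsar : Real.log (r + s) = Real.arsinh r := by
      rw [hsdef]
      simp [Real.arsinh, add_comm]
    rw [hsar]
    set t := Real.sqrt (u ^ 2 + v ^ 2) with ht'
    have ht0 : 0 ≤ t := Real.sqrt_nonneg _
    have hst : 0 ≤ Real.sinh t := Real.sinh_nonneg_iff.2 ht0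
    have hrle : r ≤ Real.sinh t := by nlinarith [Real.sinh_arsinh r]
    rw [← Real.sinh_le_sinh, Real.sinh_arsinh]
    exact hrle
  · have : ((r : ℂ) * Complex.I) ^ 2 = -(r ^ 2 : ℂ) := by
      rw [mul_pow, Complex.I_sq]; ring
    rw [this]; ring
  · rw [hj0, hjr, Real.log_one]
    rw [show (0 : ℝ) ^ 2 + Real.log (r + s) ^ 2 = Real.log (r + s) ^ 2 by ring]
    exact Real.sqrt_sq hlog0
  · rw [hj0, hjr', Real.log_one]
    rw [show (0 : ℝ) ^ 2 + Real.log (r + s) ^ 2 = Real.log (r + s) ^ 2 by ring]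
    exact Real.sqrt_sq hlog0
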